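/- arXiv:2510.09925 — 3 statements merged into one kernel-verified Lean document; each statement's English description precedes it below -/
import Mathlib

section
/- Let S ⊆ ℝⁿ, let p ≥ 1, and let H : ℝⁿ × ℝⁿ → (real symmetric p×p matrices) satisfy: (i) for every x ∈ ℝⁿ, the set { z ∈ ℝⁿ : H(z, x) is positive semidefinite } is contained in S, and (ii) H(x, x) is positive semidefinite for every x ∈ S. Let 0 < γ ≤ 1 and let (x_k)_{k≥0} be a sequence in ℝⁿ with x_0 ∈ S such that for every k ≥ 0 the matrix H(x_{k+1}, x_k) − (1−γ)·H(x_k, x_k) is positive semidefinite. Then x_k ∈ S for every k ≥ 0, and moreover H(x_{k+1}, x_k) is positive semidefinite for every k ≥ 0. -/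
/-! A safe subset function turns the matrix CBF condition into an induction: if `x k ∈ S`, then
`H(x k, x k) ⪰ 0`, so `H(x (k+1), x k) ⪰ (1 - γ) H(x k, x k) ⪰ 0`, and the subset property of
the slice `{z | H(z, x k) ⪰ 0}` puts `x (k+1)` back in `S`. -/

theorem Matrix.PosSemidef.of_sub_smul {m R α : Type*} [Ring R] [PartialOrder R] [StarRing R]
    [AddLeftMono R] [CommSemiring α] [PartialOrder α] [StarRing α] [StarOrderedRing α]
    [Algebra α R] [StarModule α R] [PosSMulMono α R] {A B : Matrix m m R} {c : α}
    (h : (B - c • A).PosSemidef) (hc : 0 ≤ c) (hA : A.PosSemidef) : B.PosSemidef := by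
  simpa using h.add (hA.smul hc)

theorem sdte_mcbf_forward_invariance_general
    (n p : ℕ) (S : Set (Fin n → ℝ))
    (H : (Fin n → ℝ) → (Fin n → ℝ) → Matrix (Fin p) (Fin p) ℝ)
    (hsub : ∀ x : Fin n → ℝ, {z : Fin n → ℝ | (H z x).PosSemidef} ⊆ S)
    (hself : ∀ x ∈ S, (H x x).PosSemidef)
    (γ : ℝ) (hγ1 : γ ≤ 1)
    (x : ℕ → (Fin n → ℝ)) (hx0 : x 0 ∈ S)
    (hstep : ∀ k, (H (x (k + 1)) (x k) - (1 - γ) • H (x k) (x k)).PosSemidef) :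
    (∀ k, x k ∈ S) ∧ (∀ k, (H (x (k + 1)) (x k)).PosSemidef) := by
  have step_psd : ∀ k, x k ∈ S → (H (x (k + 1)) (x k)).PosSemidef := fun k hk =>
    (hstep k).of_sub_smul (sub_nonneg.mpr hγ1) (hself _ hk)
  have mem : ∀ k, x k ∈ S := fun k =>
    Nat.rec hx0 (fun k hk => hsub (x k) (step_psd k hk)) k
  exact ⟨mem, fun k => step_psd k (mem k)⟩

/-- Forward invariance under the SDTE-MCBF condition given a safe subset
function `H`. -/
theorem sdte_mcbf_forward_invariance
    (n p : ℕ) (hp : 1 ≤ p) (S : Set (Fin n → ℝ))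
    (H : (Fin n → ℝ) → (Fin n → ℝ) → Matrix (Fin p) (Fin p) ℝ)
    (hsymm : ∀ z x, (H z x).IsHermitian)
    (hsub : ∀ x : Fin n → ℝ, {z : Fin n → ℝ | (H z x).PosSemidef} ⊆ S)
    (hself : ∀ x ∈ S, (H x x).PosSemidef)
    (γ : ℝ) (hγ0 : 0 < γ) (hγ1 : γ ≤ 1)
    (x : ℕ → (Fin n → ℝ)) (hx0 : x 0 ∈ S)
    (hstep : ∀ k, (H (x (k + 1)) (x k) - (1 - γ) • H (x k) (x k)).PosSemidef) :
    (∀ k, x k ∈ S) ∧ (∀ k, (H (x (k + 1)) (x k)).PosSemidef) :=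
  sdte_mcbf_forward_invariance_general n p S H hsub hself γ hγ1 x hx0 hstep
end

section
/- Let C₁, …, C_Q ⊆ ℝⁿ be nonempty closed convex sets, let S̄ = C₁ ∪ ⋯ ∪ C_Q, and let ε > 0. Let x ∈ ℝⁿ satisfy x ∉ C_i for all i; let P_i be the metric projection of x onto C_i and define a_i = (x − P_i)/‖x − P_i‖ and b_i = ε + ⟨a_i, P_i⟩. Then: (1) every z ∈ ℝⁿ with ⟨a_i, z⟩ ≥ b_i for all i satisfies dist(z, C_i) ≥ ε for all i, hence dist(z, S̄) ≥ ε; and (2) if dist(x, C_i) ≥ ε for all i, then ⟨a_i, x⟩ ≥ b_i for all i. -/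
open scoped RealInnerProductSpace

/-!
The unit normal `a = (x - p) / ‖x - p‖` at the projection `p` of `x` onto a convex set `K`
supports `K` at `p` (the variational inequality of the projection), so `⟪a, ·⟫ ≤ ⟪a, p⟫` on `K`.
If `⟪a, z⟫ ≥ ε + ⟪a, p⟫`, then for every `w ∈ K` Cauchy–Schwarz gives
`‖z - w‖ ≥ ⟪a, z - w⟫ ≥ ε`. For `z = x` one has `⟪a, x - p⟫ = ‖x - p‖ ≥ dist(x, K)`.
-/

open Metric Set

section InnerProductSpace

variable {E : Type*} [NormedAddCommGroup E] [InnerProductSpace ℝ E]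

theorem real_inner_sub_le_zero_of_forall_norm_sub_le {K : Set E} (hK : Convex ℝ K) {x p : E}
    (hp : p ∈ K) (hmin : ∀ z ∈ K, ‖p - x‖ ≤ ‖z - x‖) : ∀ w ∈ K, ⟪x - p, w - p⟫ ≤ 0 := by
  have : Nonempty K := ⟨⟨p, hp⟩⟩
  refine (norm_eq_iInf_iff_real_inner_le_zero hK hp).mp (le_antisymm ?_ ?_)
  · exact le_ciInf fun w => by simpa only [norm_sub_rev x] using hmin w w.2
  · exact ciInf_le (f := fun w : K => ‖x - (w : E)‖)
      ⟨0, by rintro _ ⟨w, rfl⟩; exact norm_nonneg _⟩ ⟨p, hp⟩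

theorem real_inner_inv_norm_smul_le_of_forall_norm_sub_le {K : Set E} (hK : Convex ℝ K)
    {x p : E} (hp : p ∈ K) (hmin : ∀ z ∈ K, ‖p - x‖ ≤ ‖z - x‖) {w : E} (hw : w ∈ K) :
    ⟪‖x - p‖⁻¹ • (x - p), w⟫ ≤ ⟪‖x - p‖⁻¹ • (x - p), p⟫ := by
  rw [← sub_nonpos, ← inner_sub_right, real_inner_smul_left]
  exact mul_nonpos_of_nonneg_of_nonpos (inv_nonneg.2 (norm_nonneg _))
    (real_inner_sub_le_zero_of_forall_norm_sub_le hK hp hmin w hw)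

theorem le_dist_of_real_inner_le {a p z w : E} {ε : ℝ} (ha : ‖a‖ ≤ 1) (hw : ⟪a, w⟫ ≤ ⟪a, p⟫)
    (hz : ε + ⟪a, p⟫ ≤ ⟪a, z⟫) : ε ≤ dist z w :=
  calc ε ≤ ⟪a, z - w⟫ := by rw [inner_sub_right]; linarith
    _ ≤ ‖a‖ * ‖z - w‖ := real_inner_le_norm a (z - w)
    _ ≤ ‖z - w‖ := mul_le_of_le_one_left (norm_nonneg _) ha
    _ = dist z w := (dist_eq_norm z w).symm

theorem real_inner_inv_norm_smul_self (v : E) : ⟪‖v‖⁻¹ • v, v⟫ = ‖v‖ := by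
  rw [real_inner_smul_left, real_inner_self_eq_norm_sq, sq, ← mul_assoc, inv_mul_mul_self]

end InnerProductSpace

theorem Metric.le_infDist_iUnion {α ι : Type*} [PseudoMetricSpace α] {s : ι → Set α} {x : α}
    {r : ℝ} (hs : (⋃ i, s i).Nonempty) (h : ∀ i, r ≤ infDist x (s i)) :
    r ≤ infDist x (⋃ i, s i) :=
  (le_infDist hs).2 fun _ hy =>
    let ⟨i, hi⟩ := mem_iUnion.1 hy
    (h i).trans (infDist_le_dist_of_mem hi)

theorem projection_safe_subset_function_general
    (n Q : ℕ) (hQ : 0 < Q) (C : Fin Q → Set (EuclideanSpace ℝ (Fin n)))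
    (hconv : ∀ i, Convex ℝ (C i))
    (ε : ℝ)
    (x : EuclideanSpace ℝ (Fin n))
    (P : Fin Q → EuclideanSpace ℝ (Fin n))
    (hP : ∀ i, P i ∈ C i) (hPmin : ∀ i, ∀ z ∈ C i, ‖P i - x‖ ≤ ‖z - x‖) :
    (∀ z : EuclideanSpace ℝ (Fin n),
        (∀ i, ε + ⟪(‖x - P i‖)⁻¹ • (x - P i), P i⟫
            ≤ ⟪(‖x - P i‖)⁻¹ • (x - P i), z⟫) →
        (∀ i, ε ≤ Metric.infDist z (C i)) ∧ ε ≤ Metric.infDist z (⋃ i, C i)) ∧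
    ((∀ i, ε ≤ Metric.infDist x (C i)) →
        ∀ i, ε + ⟪(‖x - P i‖)⁻¹ • (x - P i), P i⟫
            ≤ ⟪(‖x - P i‖)⁻¹ • (x - P i), x⟫) := by
  refine ⟨fun z hz => ?_, fun hdist i => ?_⟩
  · have hCi : ∀ i, ε ≤ infDist z (C i) := fun i =>
      (le_infDist ⟨P i, hP i⟩).2 fun _ hw =>
        le_dist_of_real_inner_le (mem_closedBall_zero_iff.1 (inv_norm_smul_mem_unitClosedBall _))
          (real_inner_inv_norm_smul_le_of_forall_norm_sub_le (hconv i) (hP i) (hPmin i) hw) (hz i)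
    exact ⟨hCi, le_infDist_iUnion ⟨P ⟨0, hQ⟩, mem_iUnion_of_mem _ (hP _)⟩ hCi⟩
  · have hnormal := real_inner_inv_norm_smul_self (x - P i)
    rw [inner_sub_right] at hnormal
    linarith [hdist i, infDist_le_dist_of_mem (x := x) (hP i), dist_eq_norm x (P i)]

/-- The projection-based halfspace construction yields a safe subset function
for the eroded safe set: (1) points satisfying all halfspace constraints are
at distance at least `ε` from every obstacle and from their union; (2) if `x`
is at distance at least `ε` from every obstacle then `x` satisfies all of its
own halfspace constraints. -/
theorem projection_safe_subset_function
    (n Q : ℕ) (hQ : 0 < Q) (C : Fin Q → Set (EuclideanSpace ℝ (Fin n)))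
    (hne : ∀ i, (C i).Nonempty) (hcl : ∀ i, IsClosed (C i))
    (hconv : ∀ i, Convex ℝ (C i))
    (ε : ℝ) (hε : 0 < ε)
    (x : EuclideanSpace ℝ (Fin n)) (hx : ∀ i, x ∉ C i)
    (P : Fin Q → EuclideanSpace ℝ (Fin n))
    (hP : ∀ i, P i ∈ C i) (hPmin : ∀ i, ∀ z ∈ C i, ‖P i - x‖ ≤ ‖z - x‖) :
    (∀ z : EuclideanSpace ℝ (Fin n),
        (∀ i, ε + ⟪(‖x - P i‖)⁻¹ • (x - P i), P i⟫
            ≤ ⟪(‖x - P i‖)⁻¹ • (x - P i), z⟫) →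
        (∀ i, ε ≤ Metric.infDist z (C i)) ∧ ε ≤ Metric.infDist z (⋃ i, C i)) ∧
    ((∀ i, ε ≤ Metric.infDist x (C i)) →
        ∀ i, ε + ⟪(‖x - P i‖)⁻¹ • (x - P i), P i⟫
            ≤ ⟪(‖x - P i‖)⁻¹ • (x - P i), x⟫) :=
  projection_safe_subset_function_general n Q hQ C hconv ε x P hP hPmin
end

section
/- Let 0 < γ ≤ 1, let 1 ≤ j ≤ p, and let (H_k)_{k≥0} be a sequence of real symmetric p×p matrices such that for every k ≥ 0 the matrix H_{k+1} − H_k + γ·λ_j(H_k)·I is positive semidefinite, where λ_j denotes the j-th smallest eigenvalue and I is the p×p identity. Then λ_j(H_k) ≥ (1−γ)^k · λ_j(H_0) for every k ≥ 0. In particular, if λ_j(H_0) ≥ 0 then λ_j(H_k) ≥ 0 for every k ≥ 0. -/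
/-- The eigenvalues of a Hermitian matrix listed in nondecreasing order. -/
noncomputable def sortedEigenvalues {p : ℕ} {A : Matrix (Fin p) (Fin p) ℝ}
    (hA : A.IsHermitian) : Fin p → ℝ :=
  fun i => hA.eigenvalues (Tuple.sort hA.eigenvalues i)

/-!
Weyl's inequality for the `j`-th smallest eigenvalue: if `A - B + c • 1 ⪰ 0`, pick a nonzero `x`
in the intersection of the span of the eigenvectors of `A` for its `j + 1` smallest eigenvalues
and the span of those of `B` for its `p - j` largest ones (the dimensions add up to `p + 1`);
comparing Rayleigh quotients at `x` gives `λ_j(B) - c ≤ λ_j(A)`. With `A = H_{k+1}`, `B = H_k`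
and `c = γ λ_j(H_k)` this is `(1 - γ) λ_j(H_k) ≤ λ_j(H_{k+1})`, which iterates since `1 - γ ≥ 0`.
-/

open Matrix Module Submodule
open scoped InnerProductSpace

namespace OrthonormalBasis

variable {ι 𝕜 E : Type*} [Fintype ι] [RCLike 𝕜] [NormedAddCommGroup E] [InnerProductSpace 𝕜 E]

lemma repr_apply_eq_zero_of_mem_span_image (b : OrthonormalBasis ι 𝕜 E) {S : Set ι} {x : E}
    (hx : x ∈ span 𝕜 (b '' S)) {i : ι} (hi : i ∉ S) : b.repr x i = 0 := by
  have hsupp := b.toBasis.repr_support_subset_of_mem_span S (by simpa using hx)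
  simpa using Finsupp.notMem_support_iff.mp fun hmem => hi (hsupp hmem)

lemma finrank_span_image (b : OrthonormalBasis ι 𝕜 E) (S : Finset ι) :
    finrank 𝕜 (span 𝕜 (b '' S)) = S.card := by
  have hli : LinearIndependent 𝕜 fun i : S => b i :=
    b.orthonormal.linearIndependent.comp _ Subtype.val_injective
  rw [Set.image_eq_range]
  exact (finrank_span_eq_card hli).trans (Fintype.card_coe S)

end OrthonormalBasis

namespace Matrix.IsHermitian

section

variable {n : Type*} [Fintype n] [DecidableEq n] {A : Matrix n n ℝ} (hA : A.IsHermitian)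

lemma toEuclideanLin_eigenvectorBasis (i : n) :
    toEuclideanLin A (hA.eigenvectorBasis i) = hA.eigenvalues i • hA.eigenvectorBasis i := by
  ext k
  simpa [toLpLin_apply] using congrFun (hA.mulVec_eigenvectorBasis i) k

lemma eigenvectorBasis_repr_toEuclideanLin (x : EuclideanSpace ℝ n) (i : n) :
    hA.eigenvectorBasis.repr (toEuclideanLin A x) i =
      hA.eigenvalues i * hA.eigenvectorBasis.repr x i := by
  rw [OrthonormalBasis.repr_apply_apply, OrthonormalBasis.repr_apply_apply,
    ← isSymmetric_toEuclideanLin_iff.mpr hA, toEuclideanLin_eigenvectorBasis, real_inner_smul_left]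

lemma inner_toEuclideanLin_self_eq_sum (x : EuclideanSpace ℝ n) :
    ⟪toEuclideanLin A x, x⟫_ℝ = ∑ i, hA.eigenvalues i * hA.eigenvectorBasis.repr x i ^ 2 := by
  rw [← hA.eigenvectorBasis.repr.inner_map_map, PiLp.inner_apply]
  simp [eigenvectorBasis_repr_toEuclideanLin, sq, mul_left_comm]

lemma norm_sq_eq_sum_eigenvectorBasis_repr (x : EuclideanSpace ℝ n) :
    ‖x‖ ^ 2 = ∑ i, hA.eigenvectorBasis.repr x i ^ 2 := by
  rw [← hA.eigenvectorBasis.repr.norm_map, EuclideanSpace.norm_sq_eq]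
  simp

lemma inner_toEuclideanLin_self_le_of_mem_span {S : Set n} {μ : ℝ}
    (hS : ∀ i ∈ S, hA.eigenvalues i ≤ μ) {x : EuclideanSpace ℝ n}
    (hx : x ∈ span ℝ (hA.eigenvectorBasis '' S)) :
    ⟪toEuclideanLin A x, x⟫_ℝ ≤ μ * ‖x‖ ^ 2 := by
  rw [hA.inner_toEuclideanLin_self_eq_sum, hA.norm_sq_eq_sum_eigenvectorBasis_repr, Finset.mul_sum]
  refine Finset.sum_le_sum fun i _ => ?_
  by_cases hi : i ∈ S
  · exact mul_le_mul_of_nonneg_right (hS i hi) (sq_nonneg _)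
  · simp [hA.eigenvectorBasis.repr_apply_eq_zero_of_mem_span_image hx hi]

lemma le_inner_toEuclideanLin_self_of_mem_span {S : Set n} {μ : ℝ}
    (hS : ∀ i ∈ S, μ ≤ hA.eigenvalues i) {x : EuclideanSpace ℝ n}
    (hx : x ∈ span ℝ (hA.eigenvectorBasis '' S)) :
    μ * ‖x‖ ^ 2 ≤ ⟪toEuclideanLin A x, x⟫_ℝ := by
  rw [hA.inner_toEuclideanLin_self_eq_sum, hA.norm_sq_eq_sum_eigenvectorBasis_repr, Finset.mul_sum]
  refine Finset.sum_le_sum fun i _ => ?_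
  by_cases hi : i ∈ S
  · exact mul_le_mul_of_nonneg_right (hS i hi) (sq_nonneg _)
  · simp [hA.eigenvectorBasis.repr_apply_eq_zero_of_mem_span_image hx hi]

end

variable {p : ℕ} {A : Matrix (Fin p) (Fin p) ℝ} (hA : A.IsHermitian) (j : Fin p)

lemma exists_finrank_eq_forall_inner_le_sortedEigenvalues :
    ∃ U : Submodule ℝ (EuclideanSpace ℝ (Fin p)), finrank ℝ U = j + 1 ∧
      ∀ x ∈ U, ⟪toEuclideanLin A x, x⟫_ℝ ≤ sortedEigenvalues hA j * ‖x‖ ^ 2 := by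
  let S := (Finset.Iic j).map (Tuple.sort hA.eigenvalues).toEmbedding
  refine ⟨span ℝ (hA.eigenvectorBasis '' S), ?_, fun x hx => ?_⟩
  · rw [OrthonormalBasis.finrank_span_image, Finset.card_map, Fin.card_Iic]
  · refine hA.inner_toEuclideanLin_self_le_of_mem_span ?_ hx
    simp only [S, Finset.coe_map, Set.forall_mem_image, Finset.coe_Iic, Set.mem_Iic]
    exact fun i hij => Tuple.monotone_sort hA.eigenvalues hij

lemma exists_finrank_eq_forall_sortedEigenvalues_le_inner :
    ∃ W : Submodule ℝ (EuclideanSpace ℝ (Fin p)), finrank ℝ W = p - j ∧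
      ∀ x ∈ W, sortedEigenvalues hA j * ‖x‖ ^ 2 ≤ ⟪toEuclideanLin A x, x⟫_ℝ := by
  let S := (Finset.Ici j).map (Tuple.sort hA.eigenvalues).toEmbedding
  refine ⟨span ℝ (hA.eigenvectorBasis '' S), ?_, fun x hx => ?_⟩
  · rw [OrthonormalBasis.finrank_span_image, Finset.card_map, Fin.card_Ici]
  · refine hA.le_inner_toEuclideanLin_self_of_mem_span ?_ hx
    simp only [S, Finset.coe_map, Set.forall_mem_image, Finset.coe_Ici, Set.mem_Ici]
    exact fun i hji => Tuple.monotone_sort hA.eigenvalues hji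

end Matrix.IsHermitian

theorem sortedEigenvalues_sub_le_of_posSemidef {p : ℕ} {A B : Matrix (Fin p) (Fin p) ℝ}
    (hA : A.IsHermitian) (hB : B.IsHermitian) {c : ℝ} (h : (A - B + c • 1).PosSemidef)
    (j : Fin p) : sortedEigenvalues hB j - c ≤ sortedEigenvalues hA j := by
  obtain ⟨U, hUdim, hU⟩ := hA.exists_finrank_eq_forall_inner_le_sortedEigenvalues j
  obtain ⟨W, hWdim, hW⟩ := hB.exists_finrank_eq_forall_sortedEigenvalues_le_inner j
  obtain ⟨x, hxU, hxW, hx0⟩ : ∃ x ∈ U, x ∈ W ∧ x ≠ 0 := by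
    have hUW : ¬Disjoint U W := fun hdisj => by
      have := finrank_add_finrank_le_of_disjoint hdisj
      rw [hUdim, hWdim, finrank_euclideanSpace_fin] at this
      omega
    simpa [disjoint_def] using hUW
  have hquad : 0 ≤ ⟪toEuclideanLin A x, x⟫_ℝ - ⟪toEuclideanLin B x, x⟫_ℝ + c * ‖x‖ ^ 2 := by
    simpa [inner_add_left, inner_sub_left, real_inner_smul_left, real_inner_self_eq_norm_sq]
      using (isPositive_toEuclideanLin_iff.mpr h).inner_nonneg_left x
  have hx : 0 < ‖x‖ ^ 2 := by positivity
  refine le_of_mul_le_mul_right ?_ hx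
  linarith [hU x hxU, hW x hxW]

theorem indefinite_safe_set_invariance_general
    (p : ℕ) (γ : ℝ) (hγ1 : γ ≤ 1) (j : Fin p)
    (H : ℕ → Matrix (Fin p) (Fin p) ℝ)
    (hH : ∀ k, (H k).IsHermitian)
    (hstep : ∀ k, (H (k + 1) - H k + (γ * sortedEigenvalues (hH k) j) •
        (1 : Matrix (Fin p) (Fin p) ℝ)).PosSemidef) :
    (∀ k, (1 - γ) ^ k * sortedEigenvalues (hH 0) j ≤ sortedEigenvalues (hH k) j) ∧
    (0 ≤ sortedEigenvalues (hH 0) j → ∀ k, 0 ≤ sortedEigenvalues (hH k) j) := by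
  have hcontract (k : ℕ) :
      (1 - γ) * sortedEigenvalues (hH k) j ≤ sortedEigenvalues (hH (k + 1)) j := by
    linarith [sortedEigenvalues_sub_le_of_posSemidef (hH (k + 1)) (hH k) (hstep k) j]
  have hrate : 0 ≤ 1 - γ := sub_nonneg.mpr hγ1
  have hgeom (k : ℕ) : (1 - γ) ^ k * sortedEigenvalues (hH 0) j ≤ sortedEigenvalues (hH k) j :=
    geom_le (u := fun k => sortedEigenvalues (hH k) j) hrate k fun i _ => hcontract i
  exact ⟨hgeom, fun h0 k => (mul_nonneg (pow_nonneg hrate k) h0).trans (hgeom k)⟩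

/-- Indefinite matrix safe sets: under the condition
`H_{k+1} - H_k + γ·λ_j(H_k)·I ⪰ 0`, the `j`-th smallest eigenvalue satisfies
`λ_j(H_k) ≥ (1-γ)^k λ_j(H_0)`; in particular it stays nonnegative if it starts
nonnegative. -/
theorem indefinite_safe_set_invariance
    (p : ℕ) (γ : ℝ) (hγ0 : 0 < γ) (hγ1 : γ ≤ 1) (j : Fin p)
    (H : ℕ → Matrix (Fin p) (Fin p) ℝ)
    (hH : ∀ k, (H k).IsHermitian)
    (hstep : ∀ k, (H (k + 1) - H k + (γ * sortedEigenvalues (hH k) j) •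
        (1 : Matrix (Fin p) (Fin p) ℝ)).PosSemidef) :
    (∀ k, (1 - γ) ^ k * sortedEigenvalues (hH 0) j ≤ sortedEigenvalues (hH k) j) ∧
    (0 ≤ sortedEigenvalues (hH 0) j → ∀ k, 0 ≤ sortedEigenvalues (hH k) j) :=
  indefinite_safe_set_invariance_general p γ hγ1 j H hH hstep
end
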